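/- arXiv:2101.05376 — 3 statements merged into one kernel-verified Lean document; each statement's English description precedes it below -/
import Mathlib

section
/- Let R be a ring. Every proper two-sided ideal I of R is the intersection of all the completely irreducible two-sided ideals of R that contain I. -/
/-- A proper two-sided ideal `I` of a ring `R` is *completely irreducible* if `I` is not the
intersection of any family of two-sided ideals of `R` each of which properly contains `I`. -/
def TwoSidedIdeal.CompletelyIrreducible {R : Type*} [Ring R] (I : TwoSidedIdeal R) : Prop :=
  I ≠ ⊤ ∧ ∀ S : Set (TwoSidedIdeal R), (∀ J ∈ S, I < J) → I ≠ sInf S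

/-!
For `x ∉ I`, Zorn's lemma gives a two-sided ideal `M ⊇ I` maximal among those avoiding `x`.
Every ideal properly containing `M` contains `x`, hence so does the intersection of any family
of them, which therefore cannot be `M`: `M` is completely irreducible. So the intersection of
the completely irreducible ideals containing `I` avoids every `x ∉ I`.
-/

namespace TwoSidedIdeal

variable {R : Type*} [Ring R]

theorem mem_sSup_of_directedOn {S : Set (TwoSidedIdeal R)} (hne : S.Nonempty)
    (hS : DirectedOn (· ≤ ·) S) {x : R} : x ∈ sSup S ↔ ∃ I ∈ S, x ∈ I := by
  refine ⟨fun hx => ?_, fun ⟨I, hI, hxI⟩ => le_sSup hI hxI⟩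
  obtain ⟨I₀, hI₀⟩ := hne
  let U : TwoSidedIdeal R := mk' {y | ∃ I ∈ S, y ∈ I} ⟨I₀, hI₀, zero_mem I₀⟩
    (fun ⟨I, hI, hy⟩ ⟨J, hJ, hz⟩ =>
      let ⟨K, hK, hIK, hJK⟩ := hS I hI J hJ
      ⟨K, hK, add_mem K (hIK hy) (hJK hz)⟩)
    (fun ⟨I, hI, hy⟩ => ⟨I, hI, neg_mem I hy⟩)
    (fun ⟨I, hI, hy⟩ => ⟨I, hI, mul_mem_left I _ _ hy⟩)
    (fun ⟨I, hI, hy⟩ => ⟨I, hI, mul_mem_right I _ _ hy⟩)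
  have hSU : sSup S ≤ U := sSup_le fun I hI y hy => (mem_mk' ..).2 ⟨I, hI, hy⟩
  have hxU := hSU hx
  rwa [mem_mk'] at hxU

theorem exists_le_maximal_notMem {I : TwoSidedIdeal R} {x : R} (hx : x ∉ I) :
    ∃ M, I ≤ M ∧ Maximal (x ∉ ·) M := by
  refine zorn_le_nonempty₀ {J | x ∉ J} (fun c hc hchain J hJ => ?_) I hx
  refine ⟨sSup c, ?_, fun K hK => le_sSup hK⟩
  show x ∉ sSup c
  rw [mem_sSup_of_directedOn ⟨J, hJ⟩ hchain.directedOn]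
  rintro ⟨K, hK, hxK⟩
  exact hc hK hxK

theorem completelyIrreducible_of_maximal_notMem {M : TwoSidedIdeal R} {x : R}
    (hM : Maximal (x ∉ ·) M) : M.CompletelyIrreducible := by
  refine ⟨fun h => hM.1 (h ▸ mem_top R), fun S hS hMS => hM.1 ?_⟩
  rw [hMS, mem_sInf]
  intro J hJ
  by_contra hxJ
  exact (hS J hJ).not_ge (hM.2 hxJ (hS J hJ).le)

end TwoSidedIdeal

theorem every_proper_ideal_eq_sInf_completelyIrreducible_general {R : Type*} [Ring R]
    (I : TwoSidedIdeal R) :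
    I = sInf {J : TwoSidedIdeal R | J.CompletelyIrreducible ∧ I ≤ J} := by
  refine le_antisymm (le_sInf fun J hJ => hJ.2) fun x hx => ?_
  by_contra hxI
  obtain ⟨M, hIM, hM⟩ := TwoSidedIdeal.exists_le_maximal_notMem hxI
  rw [TwoSidedIdeal.mem_sInf] at hx
  exact hM.1 (hx M ⟨TwoSidedIdeal.completelyIrreducible_of_maximal_notMem hM, hIM⟩)

/-- Every proper two-sided ideal of a ring is the intersection of all the completely
irreducible two-sided ideals containing it. -/
theorem every_proper_ideal_eq_sInf_completelyIrreducible {R : Type*} [Ring R]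
    (I : TwoSidedIdeal R) (hI : I ≠ ⊤) :
    I = sInf {J : TwoSidedIdeal R | J.CompletelyIrreducible ∧ I ≤ J} :=
  every_proper_ideal_eq_sInf_completelyIrreducible_general I
end

section
/- Let R be a ring. Every proper two-sided ideal of R is completely irreducible if and only if every nonempty family of two-sided ideals of R contains its own intersection (i.e., for every nonempty set Y of two-sided ideals of R, the intersection of all members of Y is itself a member of Y). -/
section CompleteLattice

variable {α : Type*} [CompleteLattice α]

theorem sInf_lt_of_mem_of_sInf_notMem {s : Set α} {a : α} (hs : sInf s ∉ s) (ha : a ∈ s) :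
    sInf s < a :=
  (sInf_le ha).lt_of_ne fun h => hs (h ▸ ha)

theorem sInf_mem_of_sInf_eq_top {s : Set α} (hs : s.Nonempty) (htop : sInf s = ⊤) : sInf s ∈ s := by
  obtain ⟨a, ha⟩ := hs
  rwa [htop, ← sInf_eq_top.1 htop a ha]

theorem sInf_mem_of_forall_ne_sInf_of_forall_lt
    (h : ∀ a : α, a ≠ ⊤ → ∀ t : Set α, (∀ b ∈ t, a < b) → a ≠ sInf t)
    {s : Set α} (hs : s.Nonempty) : sInf s ∈ s := by
  by_cases htop : sInf s = ⊤
  · exact sInf_mem_of_sInf_eq_top hs htop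
  · by_contra hmem
    exact h _ htop s (fun _ => sInf_lt_of_mem_of_sInf_notMem hmem) rfl

theorem ne_sInf_of_forall_lt_of_forall_sInf_mem (h : ∀ s : Set α, s.Nonempty → sInf s ∈ s)
    {a : α} (ha : a ≠ ⊤) {s : Set α} (hlt : ∀ b ∈ s, a < b) : a ≠ sInf s := by
  rintro rfl
  have hs : s.Nonempty := Set.nonempty_iff_ne_empty.2 fun he => ha (by simp [he])
  exact lt_irrefl _ (hlt _ (h s hs))

end CompleteLattice

/-- Every proper two-sided ideal of `R` is completely irreducible if and only if every nonempty
family of two-sided ideals of `R` contains its own intersection. -/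
theorem all_completelyIrreducible_iff_sInf_mem {R : Type*} [Ring R] :
    (∀ I : TwoSidedIdeal R, I ≠ ⊤ → I.CompletelyIrreducible) ↔
      (∀ Y : Set (TwoSidedIdeal R), Y.Nonempty → sInf Y ∈ Y) :=
  ⟨fun h _ => sInf_mem_of_forall_ne_sInf_of_forall_lt fun I hI => (h I hI).2,
    fun h _ hI => ⟨hI, fun _ => ne_sInf_of_forall_lt_of_forall_sInf_mem h hI⟩⟩
end

section
/- Let R be a ring whose two-sided ideals are well-ordered under set inclusion, i.e., the two-sided ideals of R are totally ordered by inclusion and every nonempty set of two-sided ideals has a least element. Then every proper two-sided ideal of R is completely irreducible. -/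
theorem ne_sInf_of_forall_lt {α : Type*} [CompleteLattice α]
    (hleast : ∀ Y : Set α, Y.Nonempty → ∃ b ∈ Y, ∀ c ∈ Y, b ≤ c)
    {a : α} (ha : a ≠ ⊤) {S : Set α} (hS : ∀ b ∈ S, a < b) : a ≠ sInf S := by
  rintro rfl
  rcases S.eq_empty_or_nonempty with rfl | hne
  · exact ha sInf_empty
  · obtain ⟨b, hbS, hb⟩ := hleast S hne
    exact (hS b hbS).ne (le_antisymm (sInf_le hbS) (le_sInf hb))

theorem completelyIrreducible_of_wellOrdered_general {R : Type*} [Ring R]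
    (hwo : ∀ Y : Set (TwoSidedIdeal R), Y.Nonempty → ∃ I ∈ Y, ∀ J ∈ Y, I ≤ J) :
    ∀ I : TwoSidedIdeal R, I ≠ ⊤ → I.CompletelyIrreducible :=
  fun _ hI => ⟨hI, fun _ hS => ne_sInf_of_forall_lt hwo hI hS⟩

/-- If the two-sided ideals of a ring `R` are well-ordered under set inclusion (totally ordered,
with every nonempty set of two-sided ideals having a least element), then every proper two-sided
ideal of `R` is completely irreducible. -/
theorem completelyIrreducible_of_wellOrdered {R : Type*} [Ring R]
    (htot : ∀ I J : TwoSidedIdeal R, I ≤ J ∨ J ≤ I)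
    (hwo : ∀ Y : Set (TwoSidedIdeal R), Y.Nonempty → ∃ I ∈ Y, ∀ J ∈ Y, I ≤ J) :
    ∀ I : TwoSidedIdeal R, I ≠ ⊤ → I.CompletelyIrreducible :=
  completelyIrreducible_of_wellOrdered_general hwo
end
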